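/- Let $I$ be a vector space over a field $k$ that is both an algebra (multiplication $(x,y)\mapsto xy$) and a coalgebra (comultiplication $\Delta_I$, not necessarily counital), satisfying for all $x,y\in I$: $\Delta_I(xy)=x\otimes y+y\otimes x+\sum y_1\otimes xy_2+\sum xy_1\otimes y_2+\sum x_1\otimes x_2y+\sum x_1y\otimes x_2+\sum x_1y_1\otimes x_2y_2$. Then $k\ltimes_d I=k\oplus I$ with multiplication $(\alpha,x)(\beta,y)=(\alpha\beta,\alpha y+\beta x+xy)$, comultiplication $\Delta(\alpha,x)=\alpha(1,0)\otimes(1,0)+(1,0)\otimes(0,x)+(0,x)\otimes(1,0)+\sum(0,x_1)\otimes(0,x_2)$, unit $(1,0)$, and counit $\varepsilon(\alpha,x)=\alpha$ is a bialgebra; moreover an element $(\alpha,x)$ is grouplike (i.e., $\Delta(\alpha,x)=(\alpha,x)\otimes(\alpha,x)$ and $\varepsilon(\alpha,x)=1$) if and only if $\alpha=1$ and $\Delta_I(x)=x\otimes x$. -/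

import Mathlib

open TensorProduct

/-- Coassociativity of a (not necessarily counital) comultiplication. -/
def Coassoc {k : Type*} [Field k] {V : Type*} [AddCommGroup V] [Module k V]
    (d : V →ₗ[k] V ⊗[k] V) : Prop :=
  (TensorProduct.assoc k V V V).toLinearMap ∘ₗ TensorProduct.map d LinearMap.id ∘ₗ d
    = TensorProduct.map LinearMap.id d ∘ₗ d

/-- The comultiplication of the counitization `k ⋉ P`:
`Δ(α,p) = α(1,0)⊗(1,0) + (1,0)⊗(0,p) + (0,p)⊗(1,0) + ∑(0,p₁)⊗(0,p₂)`. -/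
noncomputable def counitComul {k : Type*} [Field k] {P : Type*} [AddCommGroup P] [Module k P]
    (dP : P →ₗ[k] P ⊗[k] P) : (k × P) →ₗ[k] (k × P) ⊗[k] (k × P) :=
  LinearMap.toSpanSingleton k ((k × P) ⊗[k] (k × P))
      (((1 : k), (0 : P)) ⊗ₜ[k] ((1 : k), (0 : P))) ∘ₗ LinearMap.fst k k P
  + TensorProduct.mk k (k × P) (k × P) ((1 : k), (0 : P)) ∘ₗ
      LinearMap.inr k k P ∘ₗ LinearMap.snd k k P
  + (TensorProduct.mk k (k × P) (k × P)).flip ((1 : k), (0 : P)) ∘ₗ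
      LinearMap.inr k k P ∘ₗ LinearMap.snd k k P
  + TensorProduct.map (LinearMap.inr k k P) (LinearMap.inr k k P) ∘ₗ dP ∘ₗ LinearMap.snd k k P

/-- The multiplication of the unitization `k ⋉ I`, as a bilinear map. -/
def unitMulL {k : Type*} [Field k] {I : Type*} [AddCommGroup I] [Module k I]
    (mI : I →ₗ[k] I →ₗ[k] I) : (k × I) →ₗ[k] (k × I) →ₗ[k] k × I :=
  LinearMap.mk₂ k (fun p q => (p.1 * q.1, p.1 • q.2 + q.1 • p.2 + mI p.2 q.2))
    (by intro p p' q; simp [Prod.ext_iff, add_mul, add_smul, map_add, LinearMap.add_apply]; abel)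
    (by intro c p q
        refine Prod.ext (by simp [mul_assoc]) ?_
        simp only [Prod.smul_fst, Prod.smul_snd, smul_eq_mul, map_smul,
          LinearMap.smul_apply, smul_add, mul_smul, smul_comm q.1 c])
    (by intro p q q'; simp [Prod.ext_iff, mul_add, add_smul, map_add, smul_add]; abel)
    (by intro c p q
        refine Prod.ext (by simp; ring) ?_
        simp only [Prod.smul_fst, Prod.smul_snd, smul_eq_mul, map_smul,
          LinearMap.smul_apply, smul_add, mul_smul, smul_comm p.1 c])

/-- The induced multiplication on `A ⊗ A`: `(a ⊗ b)(c ⊗ d) = ac ⊗ bd`. -/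
noncomputable def tensorMul {k : Type*} [Field k] {A : Type*} [AddCommGroup A] [Module k A]
    (m : A →ₗ[k] A →ₗ[k] A) : (A ⊗[k] A) →ₗ[k] (A ⊗[k] A) →ₗ[k] A ⊗[k] A :=
  TensorProduct.homTensorHomMap (RingHom.id k) A A A A ∘ₗ TensorProduct.map m m

/-!
Each bialgebra identity is (bi)linear, so it suffices to check it on `(1,0)` and on the
elements `(0,x)`; on `(1,0)` it is a unit law. Writing `Δ(0,x) = (1,0)⊗(0,x) + (0,x)⊗(1,0) + ∑(0,x₁)⊗(0,x₂)`,
the product `Δ(0,x)Δ(0,y)` has nine terms: two give `(1,0)⊗(0,xy) + (0,xy)⊗(1,0)`, and the other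
seven are the right-hand side of the compatibility condition for `Δ_I(xy)`. In the two iterated
coproducts of `(0,x)` the terms with `(1,0)` in some slot agree pairwise, and the remaining ones
agree by coassociativity of `Δ_I`. Applying `snd ⊗ snd` to `Δ(α,x) = (α,x)⊗(α,x)` recovers
`Δ_I(x) = x⊗x`.
-/

section Assoc

variable {R M N P Q S : Type*} [CommSemiring R] [AddCommMonoid M] [Module R M]
  [AddCommMonoid N] [Module R N] [AddCommMonoid P] [Module R P] [AddCommMonoid Q] [Module R Q]
  [AddCommMonoid S] [Module R S]

lemma assoc_map_mk_comp (a : M) (f : Q →ₗ[R] N) (g : S →ₗ[R] P) (t : Q ⊗[R] S) :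
    TensorProduct.assoc R M N P (map (mk R M N a ∘ₗ f) g t) = a ⊗ₜ map f g t := by
  induction t using TensorProduct.induction_on <;> simp_all [tmul_add]

lemma assoc_map_mk_flip_comp (b : N) (f : Q →ₗ[R] M) (g : S →ₗ[R] P) (t : Q ⊗[R] S) :
    TensorProduct.assoc R M N P (map ((mk R M N).flip b ∘ₗ f) g t)
      = map f (mk R N P b ∘ₗ g) t := by
  induction t using TensorProduct.induction_on <;> simp_all

lemma assoc_map_tmul (f : Q →ₗ[R] M) (g : S →ₗ[R] N) (t : Q ⊗[R] S) (c : P) :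
    TensorProduct.assoc R M N P (map f g t ⊗ₜ c) = map f ((mk R N P).flip c ∘ₗ g) t := by
  induction t using TensorProduct.induction_on <;> simp_all [add_tmul]

end Assoc

section TensorMul

variable {k : Type*} [Field k] {A B : Type*} [AddCommGroup A] [Module k A]
  [AddCommGroup B] [Module k B]

lemma tensorMul_tmul_left (m : A →ₗ[k] A →ₗ[k] A) (a b : A) (t : A ⊗[k] A) :
    tensorMul m (a ⊗ₜ b) t = map (m a) (m b) t := by
  induction t using TensorProduct.induction_on <;> simp_all [tensorMul]

lemma tensorMul_tmul_right (m : A →ₗ[k] A →ₗ[k] A) (t : A ⊗[k] A) (a b : A) :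
    tensorMul m t (a ⊗ₜ b) = map (m.flip a) (m.flip b) t := by
  induction t using TensorProduct.induction_on <;> simp_all [tensorMul]

lemma tensorMul_map_map (m : A →ₗ[k] A →ₗ[k] A) (m' : B →ₗ[k] B →ₗ[k] B) (f : A →ₗ[k] B)
    (hf : ∀ x y, m' (f x) (f y) = f (m x y)) (s t : A ⊗[k] A) :
    tensorMul m' (map f f s) (map f f t) = map f f (tensorMul m s t) := by
  induction s using TensorProduct.induction_on with
  | zero => simp
  | add s s' hs hs' => simp only [map_add, LinearMap.add_apply, hs, hs']
  | tmul a b =>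
    induction t using TensorProduct.induction_on <;> simp_all [tensorMul_tmul_left]

end TensorMul

section Unitization

variable {k : Type*} [Field k] {I : Type*} [AddCommGroup I] [Module k I]
  (mI : I →ₗ[k] I →ₗ[k] I) (dI : I →ₗ[k] I ⊗[k] I)

local notation "e" => (((1 : k), (0 : I)) : k × I)
local notation "ι" => LinearMap.inr k k I

lemma unitMulL_apply (p q : k × I) :
    unitMulL mI p q = (p.1 * q.1, p.1 • q.2 + q.1 • p.2 + mI p.2 q.2) := rfl

lemma unitMulL_one_mul (p : k × I) : unitMulL mI e p = p := by
  simp [unitMulL_apply]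

lemma unitMulL_mul_one (p : k × I) : unitMulL mI p e = p := by
  simp [unitMulL_apply]

lemma unitMulL_inr_comp_inr (x : I) : unitMulL mI (ι x) ∘ₗ ι = ι ∘ₗ mI x := by
  ext y <;> simp [unitMulL_apply]

lemma unitMulL_flip_inr_comp_inr (y : I) :
    (unitMulL mI).flip (ι y) ∘ₗ ι = ι ∘ₗ mI.flip y := by
  ext x <;> simp [unitMulL_apply]

lemma unitMulL_inr_inr (x y : I) : unitMulL mI (ι x) (ι y) = ι (mI x y) :=
  LinearMap.congr_fun (unitMulL_inr_comp_inr mI x) y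

lemma unitMulL_assoc (hIassoc : ∀ x y z : I, mI (mI x y) z = mI x (mI y z)) (p q w : k × I) :
    unitMulL mI (unitMulL mI p q) w = unitMulL mI p (unitMulL mI q w) := by
  simp only [unitMulL_apply, Prod.mk.injEq, mul_assoc, true_and, map_add, map_smul,
    LinearMap.add_apply, LinearMap.smul_apply, hIassoc]
  module

lemma counitComul_apply (α : k) (x : I) :
    counitComul dI (α, x)
      = α • (e ⊗ₜ[k] e) + e ⊗ₜ[k] ι x + ι x ⊗ₜ[k] e + map ι ι (dI x) := by
  simp [counitComul, LinearMap.toSpanSingleton_apply]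

lemma counitComul_one : counitComul dI e = e ⊗ₜ[k] e := by
  simp [counitComul_apply, Prod.mk_zero_zero]

lemma counitComul_inr (x : I) :
    counitComul dI (ι x) = e ⊗ₜ[k] ι x + ι x ⊗ₜ[k] e + map ι ι (dI x) := by
  simpa using counitComul_apply dI 0 x

lemma lid_map_fst_counitComul (p : k × I) :
    TensorProduct.lid k (k × I) (map (LinearMap.fst k k I) LinearMap.id (counitComul dI p))
      = p := by
  obtain ⟨α, x⟩ := p
  simp [counitComul_apply, map_map]

lemma rid_map_fst_counitComul (p : k × I) :
    TensorProduct.rid k (k × I) (map LinearMap.id (LinearMap.fst k k I) (counitComul dI p))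
      = p := by
  obtain ⟨α, x⟩ := p
  simp [counitComul_apply, map_map]

lemma counitComul_eq_tmul_self_iff (x : I) :
    counitComul dI (1, x) = ((1, x) : k × I) ⊗ₜ[k] ((1, x) : k × I) ↔ dI x = x ⊗ₜ[k] x := by
  have hsplit : ((1, x) : k × I) = e + ι x := by simp
  constructor
  · intro h
    simpa [counitComul_apply, map_map] using
      congrArg (map (LinearMap.snd k k I) (LinearMap.snd k k I)) h
  · intro h
    rw [counitComul_apply, h, hsplit]
    simp only [one_smul, tmul_add, add_tmul, map_tmul]
    abel

lemma counitComul_unitMulL (hcompat : ∀ x y : I,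
      dI (mI x y) = x ⊗ₜ[k] y + y ⊗ₜ[k] x
        + map LinearMap.id (mI x) (dI y) + map (mI x) LinearMap.id (dI y)
        + map LinearMap.id (mI.flip y) (dI x) + map (mI.flip y) LinearMap.id (dI x)
        + tensorMul mI (dI x) (dI y)) (p q : k × I) :
    counitComul dI (unitMulL mI p q)
      = tensorMul (unitMulL mI) (counitComul dI p) (counitComul dI q) := by
  suffices h : (unitMulL mI).compr₂ (counitComul dI)
      = (tensorMul (unitMulL mI)).compl₁₂ (counitComul dI) (counitComul dI) from
    LinearMap.congr_fun₂ h p q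
  have left_unit : unitMulL mI e = LinearMap.id := LinearMap.ext (unitMulL_one_mul mI)
  have right_unit : (unitMulL mI).flip e = LinearMap.id := LinearMap.ext (unitMulL_mul_one mI)
  have tensor_one_mul (t) : tensorMul (unitMulL mI) (e ⊗ₜ e) t = t := by
    rw [tensorMul_tmul_left, left_unit, map_id, LinearMap.id_apply]
  have tensor_mul_one (t) : tensorMul (unitMulL mI) t (e ⊗ₜ e) = t := by
    rw [tensorMul_tmul_right, right_unit, map_id, LinearMap.id_apply]
  ext x y <;> simp only [LinearMap.compr₂_apply, LinearMap.compl₁₂_apply, LinearMap.comp_apply,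
    LinearMap.inl_apply]
  · rw [unitMulL_one_mul, counitComul_one, tensor_one_mul]
  · rw [unitMulL_one_mul, counitComul_one, tensor_one_mul]
  · rw [unitMulL_mul_one, counitComul_one, tensor_mul_one]
  · simp only [unitMulL_inr_inr, counitComul_inr, hcompat, map_add, LinearMap.add_apply,
      map_tmul, tensorMul_tmul_left, tensorMul_tmul_right,
      tensorMul_map_map mI (unitMulL mI) ι (unitMulL_inr_inr mI), map_map,
      left_unit, right_unit, unitMulL_inr_comp_inr, unitMulL_flip_inr_comp_inr,
      unitMulL_inr_inr, LinearMap.flip_apply, LinearMap.id_comp, LinearMap.comp_id,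
      LinearMap.id_apply]
    abel

lemma counitComul_comp_inr :
    counitComul dI ∘ₗ ι = mk k (k × I) (k × I) e ∘ₗ ι + (mk k (k × I) (k × I)).flip e ∘ₗ ι
      + map ι ι ∘ₗ dI := by
  ext x
  simp only [LinearMap.comp_apply, counitComul_inr, LinearMap.add_apply, mk_apply,
    LinearMap.flip_apply]

lemma coassoc_counitComul (hIco : Coassoc dI) : Coassoc (counitComul dI) := by
  have assoc_inr (x : I) : TensorProduct.assoc k _ _ _ (map (map ι ι ∘ₗ dI) ι (dI x))
      = map ι (map ι ι ∘ₗ dI) (dI x) := by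
    have h := LinearMap.congr_fun hIco x
    simp only [LinearMap.comp_apply, LinearEquiv.coe_coe] at h
    calc _ = TensorProduct.assoc k _ _ _ (map (map ι ι) ι (map dI LinearMap.id (dI x))) := by
          rw [map_map, LinearMap.comp_id]
      _ = map ι (map ι ι) (map LinearMap.id dI (dI x)) := by rw [← map_map_assoc, h]
      _ = _ := by rw [map_map, LinearMap.comp_id]
  ext x
  · simp only [LinearMap.comp_apply, LinearMap.inl_apply, LinearEquiv.coe_coe, counitComul_one,
      map_tmul, LinearMap.id_apply, assoc_tmul]
  · simp only [LinearMap.comp_apply, LinearEquiv.coe_coe, counitComul_inr, map_add, map_tmul,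
      counitComul_one, LinearMap.id_apply, map_map, counitComul_comp_inr, map_add_left,
      map_add_right, LinearMap.add_apply, LinearMap.id_comp, add_tmul, tmul_add, assoc_tmul,
      assoc_map_mk_comp, assoc_map_mk_flip_comp, assoc_map_tmul, assoc_inr]
    abel

end Unitization

theorem stmt19 {k : Type*} [Field k] {I : Type*} [AddCommGroup I] [Module k I]
    (mI : I →ₗ[k] I →ₗ[k] I) (dI : I →ₗ[k] I ⊗[k] I)
    -- `I` is an algebra and a coalgebra
    (hIassoc : ∀ x y z : I, mI (mI x y) z = mI x (mI y z))
    (hIco : Coassoc dI)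
    -- the compatibility condition
    -- `Δ(xy) = x⊗y + y⊗x + ∑y₁⊗xy₂ + ∑xy₁⊗y₂ + ∑x₁⊗x₂y + ∑x₁y⊗x₂ + ∑x₁y₁⊗x₂y₂`
    (hcompat : ∀ x y : I,
      dI (mI x y) = x ⊗ₜ[k] y + y ⊗ₜ[k] x
        + TensorProduct.map LinearMap.id (mI x) (dI y)
        + TensorProduct.map (mI x) LinearMap.id (dI y)
        + TensorProduct.map LinearMap.id (mI.flip y) (dI x)
        + TensorProduct.map (mI.flip y) LinearMap.id (dI x)
        + tensorMul mI (dI x) (dI y)) :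
    -- then `k ⋉ I` is a bialgebra:
    -- the multiplication is associative, with identity `(1,0)`
    (∀ p q w : k × I,
      unitMulL mI (unitMulL mI p q) w = unitMulL mI p (unitMulL mI q w)) ∧
    (∀ p : k × I,
      unitMulL mI ((1 : k), (0 : I)) p = p ∧ unitMulL mI p ((1 : k), (0 : I)) = p) ∧
    -- the comultiplication is coassociative, with counit `ε(α,x) = α`
    Coassoc (counitComul dI) ∧
    (∀ p : k × I,
      (TensorProduct.lid k (k × I)) (TensorProduct.map (LinearMap.fst k k I) LinearMap.id
        (counitComul dI p)) = p ∧
      (TensorProduct.rid k (k × I)) (TensorProduct.map LinearMap.id (LinearMap.fst k k I)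
        (counitComul dI p)) = p) ∧
    -- the comultiplication and counit are algebra homomorphisms
    (∀ p q : k × I,
      counitComul dI (unitMulL mI p q)
        = tensorMul (unitMulL mI) (counitComul dI p) (counitComul dI q)) ∧
    counitComul dI ((1 : k), (0 : I))
      = (((1 : k), (0 : I)) : k × I) ⊗ₜ[k] (((1 : k), (0 : I)) : k × I) ∧
    (∀ p q : k × I, (unitMulL mI p q).1 = p.1 * q.1) ∧
    ((((1 : k), (0 : I)) : k × I).1 = 1) ∧
    -- `(α, x)` is grouplike iff `α = 1` and `Δ_I(x) = x ⊗ x`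
    (∀ (α : k) (x : I),
      (counitComul dI (α, x) = ((α, x) : k × I) ⊗ₜ[k] ((α, x) : k × I) ∧
        ((α, x) : k × I).1 = 1)
      ↔ (α = 1 ∧ dI x = x ⊗ₜ[k] x)) := by
  refine ⟨unitMulL_assoc mI hIassoc, fun p => ⟨unitMulL_one_mul mI p, unitMulL_mul_one mI p⟩,
    coassoc_counitComul dI hIco,
    fun p => ⟨lid_map_fst_counitComul dI p, rid_map_fst_counitComul dI p⟩,
    counitComul_unitMulL mI dI hcompat, counitComul_one dI, fun _ _ => rfl, rfl, ?_⟩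
  intro α x
  constructor
  · rintro ⟨h, hα⟩
    obtain rfl : α = 1 := hα
    exact ⟨rfl, (counitComul_eq_tmul_self_iff dI x).1 h⟩
  · rintro ⟨rfl, h⟩
    exact ⟨(counitComul_eq_tmul_self_iff dI x).2 h, rfl⟩
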